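/- The occupation measure of any CPU policy is feasible for the base LP: if π is a stationary policy in Π_CPU, then x := Pr^∞_π satisfies the stationarity constraints ∑_{s,a} x_{sa}T(s'|s,a) = ∑_a x_{s'a}, vanishes on states outside the TSCCs of the MDP, and there exists y ≥ 0 satisfying the flow-balance constraints ∑_{s,a} y_{sa}T(s'|s,a) = ∑_a(x_{s'a}+y_{s'a}) − β_{s'}. -/

import Mathlib

open Filter

/-- A terminal strongly connected component of the directed graph with edge relation
`E`: nonempty, strongly connected, closed (no outgoing edges), and reachable from the
support of the initial distribution `β`. -/
def IsTSCC {S : Type*} (E : S → S → Prop) (β : S → ℝ) (C : Set S) : Prop :=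
  C.Nonempty ∧
  (∀ s ∈ C, ∀ s' ∈ C, Relation.ReflTransGen E s s') ∧
  (∀ s ∈ C, ∀ s', E s s' → s' ∈ C) ∧
  (∃ s₀, 0 < β s₀ ∧ ∃ s ∈ C, Relation.ReflTransGen E s₀ s)

/-- The union of all TSCC states. -/
def rSet {S : Type*} (E : S → S → Prop) (β : S → ℝ) : Set S :=
  {s | ∃ C : Set S, IsTSCC E β C ∧ s ∈ C}

/-- Edge relation of the transition graph of an MDP. -/
def mdpEdge {S A : Type*} (avail : S → Finset A) (T : S → A → S → ℝ)
    (s s' : S) : Prop :=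
  ∃ a ∈ avail s, 0 < T s a s'

/-- Edge relation of the transition graph of the Markov chain induced by policy `π`. -/
def chainEdge {S A : Type*} (avail : S → Finset A) (T : S → A → S → ℝ)
    (π : S → A → ℝ) (s s' : S) : Prop :=
  0 < ∑ a ∈ avail s, π s a * T s a s'

/-- `π` is a stationary policy: a probability distribution over `avail s` at each `s`. -/
def IsPolicy {S A : Type*} (avail : S → Finset A) (π : S → A → ℝ) : Prop :=
  (∀ s a, 0 ≤ π s a) ∧ ∀ s, ∑ a ∈ avail s, π s a = 1

/-- The multichain LP constraints: stationarity of `x`, flow balance of `y` with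
initial distribution `β`, `x` vanishing outside the TSCCs, `x ∈ [0,1]`, `y ≥ 0`. -/
def LPConstraints {S A : Type*} [Fintype S] (avail : S → Finset A)
    (T : S → A → S → ℝ) (β : S → ℝ) (x y : S → A → ℝ) : Prop :=
  (∀ s a, 0 ≤ x s a ∧ x s a ≤ 1) ∧ (∀ s a, 0 ≤ y s a) ∧
  (∀ s', ∑ s, ∑ a ∈ avail s, x s a * T s a s' = ∑ a ∈ avail s', x s' a) ∧
  (∀ s', ∑ s, ∑ a ∈ avail s, y s a * T s a s' =
      (∑ a ∈ avail s', (x s' a + y s' a)) - β s') ∧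
  (∀ s, s ∉ rSet (mdpEdge avail T) β → ∑ a ∈ avail s, x s a = 0)

/-- `π` is the policy derived from `(x,y)` by normalization. -/
def DerivedPolicy {S A : Type*} (avail : S → Finset A)
    (x y π : S → A → ℝ) : Prop :=
  (∀ s, 0 < ∑ a ∈ avail s, x s a →
      ∀ a, π s a = x s a / ∑ a' ∈ avail s, x s a') ∧
  (∀ s, ∑ a ∈ avail s, x s a = 0 → 0 < ∑ a ∈ avail s, y s a →
      ∀ a, π s a = y s a / ∑ a' ∈ avail s, y s a')

/-- `π` is class-preserving up to unichain: the recurrent set of the induced chain lies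
inside the TSCCs of the MDP, and each TSCC of the MDP contains a unique TSCC of the
induced chain. -/
def IsCPU {S A : Type*} (avail : S → Finset A) (T : S → A → S → ℝ)
    (β : S → ℝ) (π : S → A → ℝ) : Prop :=
  rSet (chainEdge avail T π) β ⊆ rSet (mdpEdge avail T) β ∧
  ∀ C : Set S, IsTSCC (mdpEdge avail T) β C →
    ∃! D : Set S, D ⊆ C ∧ IsTSCC (chainEdge avail T π) β D

/-- `π` is class-preserving: the induced chain has exactly the TSCCs of the MDP. -/
def IsCP {S A : Type*} (avail : S → Finset A) (T : S → A → S → ℝ)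
    (β : S → ℝ) (π : S → A → ℝ) : Prop :=
  rSet (chainEdge avail T π) β = rSet (mdpEdge avail T) β ∧
  ∀ C : Set S, IsTSCC (mdpEdge avail T) β C ↔ IsTSCC (chainEdge avail T π) β C

/-- `π` is edge-preserving: it plays every available action on the TSCC states of the
MDP and its induced recurrent set equals that of the MDP. -/
def IsEP {S A : Type*} (avail : S → Finset A) (T : S → A → S → ℝ)
    (β : S → ℝ) (π : S → A → ℝ) : Prop :=
  rSet (chainEdge avail T π) β = rSet (mdpEdge avail T) β ∧
  ∀ s ∈ rSet (mdpEdge avail T) β, ∀ a ∈ avail s, 0 < π s a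

/-! With `μ = β Tinf`, stationarity of `x` is `Tinf * Tπ = Tinf`, which holds for the Cesàro
limit of the powers of any stochastic matrix.

A stationary `μ ≥ 0` lets no mass leave a set that no edge enters, so every state it charges
lies in a closed communicating class of the induced chain, reachable from the support of `β`
since `μ = β Tinf`. Hence `μ` vanishes off the TSCCs of the chain and, by the CPU condition,
off those of the MDP.

For flow balance, `g = β (1 - Tπ + Tinf)⁻¹` satisfies `g Tπ = g + μ - β`. The inverse is the
Cesàro limit of the partial sums of `∑ (Tπ - Tinf) ^ t`, and `(Tπ - Tinf) ^ t = Tπ ^ t - Tinf`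
for `t ≥ 1`, so `g` is nonnegative wherever `μ` vanishes. Adding a large multiple of `μ` gives
a nonnegative solution `ν`, and `y = ν π`. -/

open Matrix Finset Topology Relation

theorem tendsto_inv_smul_zero_of_abs_le {ι κ : Type*} {M : ℕ → Matrix ι κ ℝ} {C : ℝ}
    (hM : ∀ n i j, |M n i j| ≤ C) : Tendsto (fun n : ℕ => (n : ℝ)⁻¹ • M n) atTop (𝓝 0) := by
  refine tendsto_pi_nhds.2 fun i => tendsto_pi_nhds.2 fun j => ?_
  have hC : Tendsto (fun n : ℕ => (n : ℝ)⁻¹ * C) atTop (𝓝 0) := by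
    simpa using tendsto_inv_atTop_nhds_zero_nat.mul_const C
  refine squeeze_zero_norm (fun n => ?_) hC
  rw [Matrix.smul_apply, smul_eq_mul, norm_mul, norm_inv, Real.norm_natCast, Real.norm_eq_abs]
  exact mul_le_mul_of_nonneg_left (hM n i j) (by positivity)

section MarkovChain

variable {S : Type*} [Fintype S] [DecidableEq S]

noncomputable def cesaroMean (P : Matrix S S ℝ) (n : ℕ) : Matrix S S ℝ :=
  (n : ℝ)⁻¹ • ∑ t ∈ Icc 1 n, P ^ t

theorem cesaroMean_mul_self (P : Matrix S S ℝ) (n : ℕ) :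
    cesaroMean P n * P = cesaroMean P n + (n : ℝ)⁻¹ • (P ^ (n + 1) - P) := by
  have hshift : ∑ t ∈ Icc 1 n, P ^ t * P = ∑ t ∈ Icc 1 n, P ^ t + (P ^ (n + 1) - P) := by
    induction n with
    | zero => simp
    | succ n ih =>
      rw [sum_Icc_succ_top (by omega), sum_Icc_succ_top (by omega), ih, ← pow_succ]
      abel
  rw [cesaroMean, smul_mul, sum_mul, hshift, smul_add]

theorem cesaroMean_apply (P : Matrix S S ℝ) (n : ℕ) (i j : S) :
    cesaroMean P n i j = (n : ℝ)⁻¹ * ∑ t ∈ Icc 1 n, (P ^ t) i j := by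
  simp [cesaroMean, Matrix.sum_apply]

section CesaroLimit

variable {P Q : Matrix S S ℝ} (hQ : Tendsto (cesaroMean P) atTop (𝓝 Q))
include hQ

theorem cesaroLimit_mul_self (hP : P ∈ rowStochastic ℝ S) : Q * P = Q := by
  have hbound : ∀ n i j, |(P ^ (n + 1) - P) i j| ≤ 1 := fun n _ _ =>
    abs_sub_le_of_nonneg_of_le ((pow_mem hP (n + 1)).1 _ _)
      (le_one_of_mem_rowStochastic (pow_mem hP (n + 1))) (hP.1 _ _) (le_one_of_mem_rowStochastic hP)
  have hlim : Tendsto (fun n => cesaroMean P n * P) atTop (𝓝 (Q * P)) := hQ.mul_const P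
  have hlim' : Tendsto (fun n => cesaroMean P n * P) atTop (𝓝 Q) := by
    simpa only [cesaroMean_mul_self, add_zero] using
      hQ.add (tendsto_inv_smul_zero_of_abs_le hbound)
  exact tendsto_nhds_unique hlim hlim'

theorem self_mul_cesaroLimit (hP : P ∈ rowStochastic ℝ S) : P * Q = Q := by
  have hcomm : ∀ n, P * cesaroMean P n = cesaroMean P n * P := fun n => by
    simp only [cesaroMean, Matrix.mul_smul, smul_mul, mul_sum, sum_mul, pow_mul_comm']
  have hlim : Tendsto (fun n => P * cesaroMean P n) atTop (𝓝 (Q * P)) := by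
    simpa only [hcomm] using hQ.mul_const P
  rw [tendsto_nhds_unique (hQ.const_mul P) hlim, cesaroLimit_mul_self hQ hP]

theorem pow_mul_cesaroLimit (hP : P ∈ rowStochastic ℝ S) (t : ℕ) : P ^ t * Q = Q := by
  induction t with
  | zero => rw [pow_zero, one_mul]
  | succ t ih => rw [pow_succ', mul_assoc, ih, self_mul_cesaroLimit hQ hP]

theorem vecMul_cesaroLimit_of_vecMul_eq {v : S → ℝ} (hv : v ᵥ* P = v) : v ᵥ* Q = v := by
  have hpow : ∀ t, v ᵥ* P ^ t = v := by
    intro t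
    induction t with
    | zero => rw [pow_zero, vecMul_one]
    | succ t ih => rw [pow_succ, ← vecMul_vecMul, ih, hv]
  have hmean : ∀ n ≠ 0, v ᵥ* cesaroMean P n = v := by
    intro n hn
    rw [cesaroMean, vecMul_smul, vecMul_sum]
    simp only [hpow, sum_const, Nat.card_Icc, Nat.add_sub_cancel, ← Nat.cast_smul_eq_nsmul ℝ,
      smul_smul, inv_mul_cancel₀ (Nat.cast_ne_zero.2 hn : (n : ℝ) ≠ 0), one_smul]
  refine tendsto_nhds_unique (((continuous_const.matrix_vecMul continuous_id).tendsto Q).comp hQ)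
    (tendsto_const_nhds.congr' ?_)
  filter_upwards [eventually_ne_atTop 0] with n hn
  exact (hmean n hn).symm

theorem cesaroLimit_mul_cesaroLimit (hP : P ∈ rowStochastic ℝ S) : Q * Q = Q := by
  funext i
  rw [mul_apply_eq_vecMul]
  exact vecMul_cesaroLimit_of_vecMul_eq hQ
    (by rw [← mul_apply_eq_vecMul, cesaroLimit_mul_self hQ hP])

theorem cesaroLimit_nonneg (hP : P ∈ rowStochastic ℝ S) (i j : S) : 0 ≤ Q i j := by
  refine ge_of_tendsto' (tendsto_pi_nhds.1 (tendsto_pi_nhds.1 hQ i) j) fun n => ?_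
  rw [cesaroMean_apply]
  exact mul_nonneg (by positivity)
    (sum_nonneg fun t _ => nonneg_of_mem_rowStochastic (pow_mem hP t))

theorem exists_pow_pos_of_cesaroLimit_pos {i j : S} (hij : 0 < Q i j) :
    ∃ t, 0 < (P ^ t) i j := by
  by_contra! h
  refine hij.not_ge (le_of_tendsto' (tendsto_pi_nhds.1 (tendsto_pi_nhds.1 hQ i) j) fun n => ?_)
  rw [cesaroMean_apply]
  exact mul_nonpos_of_nonneg_of_nonpos (by positivity) (sum_nonpos fun t _ => h t)

end CesaroLimit

section FundamentalMatrix

variable {P Q : Matrix S S ℝ} (hQ : Tendsto (cesaroMean P) atTop (𝓝 Q))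
  (hP : P ∈ rowStochastic ℝ S)
include hQ hP

theorem one_sub_add_cesaroLimit_mul_cesaroLimit : (1 - P + Q) * Q = Q := by
  rw [add_mul, sub_mul, one_mul, self_mul_cesaroLimit hQ hP, cesaroLimit_mul_cesaroLimit hQ hP]
  abel

theorem isUnit_det_one_sub_add_cesaroLimit : IsUnit (1 - P + Q).det := by
  rw [isUnit_iff_ne_zero, Ne, ← exists_vecMul_eq_zero_iff]
  rintro ⟨v, hv0, hv⟩
  have hvQ : v ᵥ* Q = 0 := by
    rw [← one_sub_add_cesaroLimit_mul_cesaroLimit hQ hP, ← vecMul_vecMul, hv, zero_vecMul]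
  have hvP : v ᵥ* P = v := by
    rw [vecMul_add, vecMul_sub, vecMul_one, hvQ, add_zero, sub_eq_zero] at hv
    exact hv.symm
  exact hv0 (by rw [← vecMul_cesaroLimit_of_vecMul_eq hQ hvP, hvQ])

theorem sub_cesaroLimit_pow {m : ℕ} (hm : m ≠ 0) : (P - Q) ^ m = P ^ m - Q := by
  induction m with
  | zero => exact absurd rfl hm
  | succ m ih =>
    rcases eq_or_ne m 0 with rfl | hm'
    · simp
    rw [pow_succ, ih hm', sub_mul, mul_sub, mul_sub, pow_mul_cesaroLimit hQ hP,
      cesaroLimit_mul_self hQ hP, cesaroLimit_mul_cesaroLimit hQ hP, ← pow_succ]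
    abel

theorem geom_sum_sub_cesaroLimit_mul {m : ℕ} (hm : m ≠ 0) :
    (∑ t ∈ range m, (P - Q) ^ t) * (1 - P + Q) = 1 + Q - P ^ m := by
  have hneg : 1 - P + Q = -((P - Q) - 1) := by abel
  rw [hneg, mul_neg, geom_sum_mul, sub_cesaroLimit_pow hQ hP hm]
  abel

theorem vecMul_inv_one_sub_add_nonneg {β : S → ℝ} (hβ : ∀ s, 0 ≤ β s) {u : S}
    (hu : (β ᵥ* Q) u = 0) : 0 ≤ (β ᵥ* (1 - P + Q)⁻¹) u := by
  set Z := 1 - P + Q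
  set B : ℕ → Matrix S S ℝ := fun n => (n : ℝ)⁻¹ • ∑ m ∈ Icc 1 n, ∑ t ∈ range m, (P - Q) ^ t
  have hB : ∀ n ≠ 0, B n = (1 + Q - cesaroMean P n) * Z⁻¹ := by
    intro n hn
    have hBZ : B n * Z = 1 + Q - cesaroMean P n := by
      rw [smul_mul, sum_mul, sum_congr rfl fun m hm =>
        geom_sum_sub_cesaroLimit_mul hQ hP (m := m) (by simp at hm; omega)]
      rw [sum_sub_distrib, sum_const, Nat.card_Icc, Nat.add_sub_cancel, smul_sub,
        ← Nat.cast_smul_eq_nsmul ℝ, smul_smul,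
        inv_mul_cancel₀ (Nat.cast_ne_zero.2 hn : (n : ℝ) ≠ 0), one_smul, cesaroMean]
    rw [← hBZ, mul_assoc, mul_nonsing_inv Z (isUnit_det_one_sub_add_cesaroLimit hQ hP), mul_one]
  have hlim : Tendsto B atTop (𝓝 Z⁻¹) := by
    have h := (tendsto_const_nhds (x := 1 + Q)).sub hQ |>.mul_const Z⁻¹
    rw [add_sub_cancel_right, one_mul] at h
    refine h.congr' ?_
    filter_upwards [eventually_ne_atTop 0] with n hn
    exact (hB n hn).symm
  have hterm : ∀ t, 0 ≤ (β ᵥ* (P - Q) ^ t) u := by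
    intro t
    rcases eq_or_ne t 0 with rfl | ht
    · simpa using hβ u
    rw [sub_cesaroLimit_pow hQ hP ht, vecMul_sub, Pi.sub_apply, hu, sub_zero]
    exact nonneg_vecMul_of_mem_rowStochastic (pow_mem hP t) hβ u
  refine ge_of_tendsto' ((((continuous_apply u).comp
    (continuous_const.matrix_vecMul continuous_id)).tendsto _).comp hlim) fun n => ?_
  simp only [Function.comp_apply, id, B, vecMul_smul, vecMul_sum, Pi.smul_apply,
    Finset.sum_apply, smul_eq_mul]
  exact mul_nonneg (by positivity) (sum_nonneg fun m _ => sum_nonneg fun t _ => hterm t)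

theorem vecMul_inv_one_sub_add_vecMul (β : S → ℝ) :
    (β ᵥ* (1 - P + Q)⁻¹) ᵥ* P = β ᵥ* (1 - P + Q)⁻¹ + β ᵥ* Q - β := by
  set Z := 1 - P + Q
  have hZ := isUnit_det_one_sub_add_cesaroLimit hQ hP
  have hgZ : (β ᵥ* Z⁻¹) ᵥ* Z = β := by rw [vecMul_vecMul, nonsing_inv_mul Z hZ, vecMul_one]
  have hgQ : (β ᵥ* Z⁻¹) ᵥ* Q = β ᵥ* Q := by
    rw [vecMul_vecMul, ← one_sub_add_cesaroLimit_mul_cesaroLimit hQ hP,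
      nonsing_inv_mul_cancel_left Z Q hZ, one_sub_add_cesaroLimit_mul_cesaroLimit hQ hP]
  have hPZ : P = 1 - Z + Q := by simp only [Z]; abel
  rw [hPZ, vecMul_add, vecMul_sub, vecMul_one, hgZ, hgQ]
  abel

end FundamentalMatrix

theorem exists_forall_add_mul_nonneg {ι : Type*} [Fintype ι] {g μ : ι → ℝ}
    (hμ : ∀ i, 0 ≤ μ i) (hg : ∀ i, μ i = 0 → 0 ≤ g i) : ∃ c : ℝ, ∀ i, 0 ≤ g i + c * μ i := by
  refine ⟨∑ j, |g j| / μ j, fun i => ?_⟩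
  rcases (hμ i).eq_or_lt with h | h
  · rw [← h, mul_zero, add_zero]
    exact hg i h.symm
  · have hle : |g i| / μ i ≤ ∑ j, |g j| / μ j :=
      single_le_sum (fun j _ => div_nonneg (abs_nonneg _) (hμ j)) (mem_univ i)
    linarith [neg_abs_le (g i), (div_le_iff₀ h).1 hle]

theorem exists_nonneg_vecMul_eq_add_sub {P Q : Matrix S S ℝ}
    (hQ : Tendsto (cesaroMean P) atTop (𝓝 Q)) (hP : P ∈ rowStochastic ℝ S) {β : S → ℝ}
    (hβ : ∀ s, 0 ≤ β s) : ∃ ν : S → ℝ, (∀ s, 0 ≤ ν s) ∧ ν ᵥ* P = ν + β ᵥ* Q - β := by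
  have hμ : ∀ s, 0 ≤ (β ᵥ* Q) s := fun s =>
    sum_nonneg fun i _ => mul_nonneg (hβ i) (cesaroLimit_nonneg hQ hP i s)
  obtain ⟨c, hc⟩ := exists_forall_add_mul_nonneg hμ
    fun u hu => vecMul_inv_one_sub_add_nonneg hQ hP hβ hu
  refine ⟨β ᵥ* (1 - P + Q)⁻¹ + c • (β ᵥ* Q), hc, ?_⟩
  rw [add_vecMul, smul_vecMul, vecMul_inv_one_sub_add_vecMul hQ hP, vecMul_vecMul β Q,
    cesaroLimit_mul_self hQ hP]
  abel

section StationaryMeasure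

variable {P : Matrix S S ℝ} {μ : S → ℝ}

theorem reflTransGen_of_pow_apply_pos (hP : ∀ i j, 0 ≤ P i j) {t : ℕ} {u v : S}
    (h : 0 < (P ^ t) u v) : ReflTransGen (fun i j => 0 < P i j) u v := by
  induction t generalizing v with
  | zero =>
    rw [pow_zero, one_apply] at h
    split_ifs at h with huv
    · exact huv ▸ .refl
    · exact absurd h (lt_irrefl 0)
  | succ t ih =>
    rw [pow_succ, mul_apply, sum_pos_iff_of_nonneg fun w _ =>
      mul_nonneg (pow_apply_nonneg hP t u w) (hP w v)] at h
    obtain ⟨w, -, hw⟩ := h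
    obtain ⟨huw, hwv⟩ := (pos_and_pos_or_neg_and_neg_of_mul_pos hw).resolve_right
      fun hneg => (hP w v).not_gt hneg.2
    exact (ih huw).tail hwv

variable (hP : P ∈ rowStochastic ℝ S) (hμ0 : ∀ s, 0 ≤ μ s) (hμ : μ ᵥ* P = μ)
include hP hμ0 hμ

theorem stationary_pos_of_reflTransGen {u v : S} (hu : 0 < μ u)
    (huv : ReflTransGen (fun i j => 0 < P i j) u v) : 0 < μ v := by
  induction huv with
  | refl => exact hu
  | @tail w v _ hwv ih =>
    calc 0 < μ w * P w v := mul_pos ih hwv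
      _ ≤ ∑ i, μ i * P i v :=
        single_le_sum (f := fun i => μ i * P i v)
          (fun i _ => mul_nonneg (hμ0 i) (nonneg_of_mem_rowStochastic hP)) (mem_univ w)
      _ = μ v := congrFun hμ v

theorem stationary_edge_mem_of_pred_closed {A : Set S}
    (hA : ∀ i j, 0 < P i j → j ∈ A → i ∈ A) {u v : S} (hu : u ∈ A) (hμu : 0 < μ u)
    (huv : 0 < P u v) : v ∈ A := by
  classical
  set χ : S → ℝ := fun j => if j ∈ A then 1 else 0
  have hχ : ∀ j, 0 ≤ χ j ∧ χ j ≤ 1 := fun j => by by_cases hj : j ∈ A <;> simp [χ, hj]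
  -- `P χ ≤ χ` as no edge enters `A`, and stationarity makes `μ ⬝ᵥ (χ - P χ)` vanish, so
  -- `(P χ) u = 1`: row `u` of `P` is supported in `A`.
  have hPχ : ∀ i, (P *ᵥ χ) i ≤ χ i := by
    intro i
    by_cases hi : i ∈ A
    · calc (P *ᵥ χ) i ≤ ∑ j, P i j := sum_le_sum fun j _ =>
            mul_le_of_le_one_right (nonneg_of_mem_rowStochastic hP) (hχ j).2
        _ = χ i := by simp [χ, hi, sum_row_of_mem_rowStochastic hP]
    · refine (sum_nonpos fun j _ => ?_).trans (by simp [χ, hi])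
      by_cases hj : j ∈ A
      · simp [χ, hj, (nonneg_of_mem_rowStochastic hP).antisymm
          (not_lt.1 fun hij => hi (hA i j hij hj))]
      · simp [χ, hj]
  have hdefect : ∑ i, μ i * (χ i - (P *ᵥ χ) i) = 0 := by
    simp only [mul_sub, sum_sub_distrib]
    rw [sub_eq_zero]
    exact (congrArg (· ⬝ᵥ χ) hμ).symm.trans (dotProduct_mulVec μ P χ).symm
  have hfull : (P *ᵥ χ) u = ∑ j, P u j := by
    have hzero := (sum_eq_zero_iff_of_nonneg fun i _ =>
      mul_nonneg (hμ0 i) (sub_nonneg.2 (hPχ i))).1 hdefect u (mem_univ u)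
    rw [sum_row_of_mem_rowStochastic hP,
      ← sub_eq_zero.1 ((mul_eq_zero.1 hzero).resolve_left hμu.ne')]
    simp [χ, hu]
  have hleak : ∑ j, P u j * (1 - χ j) = 0 := by
    simp only [mul_sub, mul_one, sum_sub_distrib]
    exact sub_eq_zero.2 hfull.symm
  have hv := (sum_eq_zero_iff_of_nonneg fun j _ =>
    mul_nonneg (nonneg_of_mem_rowStochastic hP) (sub_nonneg.2 (hχ j).2)).1 hleak v (mem_univ v)
  by_contra hvA
  simp [χ, hvA, huv.ne'] at hv

theorem stationary_reflTransGen_symm {u v : S} (hu : 0 < μ u)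
    (huv : ReflTransGen (fun i j => 0 < P i j) u v) :
    ReflTransGen (fun i j => 0 < P i j) v u := by
  induction huv with
  | refl => exact .refl
  | @tail w v huw hwv ih =>
    exact stationary_edge_mem_of_pred_closed hP hμ0 hμ
      (A := {i | ReflTransGen (fun i j => 0 < P i j) i u}) (fun _ _ hij hj => hj.head hij) ih
      (stationary_pos_of_reflTransGen hP hμ0 hμ hu huw) hwv

theorem stationary_mem_rSet {β : S → ℝ} {s₀ u : S} (hs₀ : 0 < β s₀)
    (hs₀u : ReflTransGen (fun i j => 0 < P i j) s₀ u) (hu : 0 < μ u) :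
    u ∈ rSet (fun i j => 0 < P i j) β :=
  ⟨{v | ReflTransGen (fun i j => 0 < P i j) u v},
    ⟨⟨u, .refl⟩, fun _ hv _ hw => (stationary_reflTransGen_symm hP hμ0 hμ hu hv).trans hw,
      fun _ hv _ hvw => hv.tail hvw, ⟨s₀, hs₀, u, .refl, hs₀u⟩⟩, .refl⟩

end StationaryMeasure

theorem cesaroLimit_vecMul_eq_zero_of_notMem_rSet {P Q : Matrix S S ℝ}
    (hQ : Tendsto (cesaroMean P) atTop (𝓝 Q)) (hP : P ∈ rowStochastic ℝ S) {β : S → ℝ}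
    (hβ : ∀ s, 0 ≤ β s) {u : S} (hu : u ∉ rSet (fun i j => 0 < P i j) β) :
    (β ᵥ* Q) u = 0 := by
  have hμ0 : ∀ s, 0 ≤ (β ᵥ* Q) s := fun s =>
    sum_nonneg fun i _ => mul_nonneg (hβ i) (cesaroLimit_nonneg hQ hP i s)
  refine ((hμ0 u).eq_or_lt.resolve_right fun hpos => hu ?_).symm
  obtain ⟨s₀, -, hs₀⟩ := (sum_pos_iff_of_nonneg fun i _ =>
    mul_nonneg (hβ i) (cesaroLimit_nonneg hQ hP i u)).1 hpos
  obtain ⟨hβs₀, hQs₀⟩ := (pos_and_pos_or_neg_and_neg_of_mul_pos hs₀).resolve_right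
    fun hneg => (hβ s₀).not_gt hneg.1
  obtain ⟨t, ht⟩ := exists_pow_pos_of_cesaroLimit_pos hQ hQs₀
  exact stationary_mem_rSet hP hμ0 (by rw [vecMul_vecMul, cesaroLimit_mul_self hQ hP]) hβs₀
    (reflTransGen_of_pow_apply_pos (fun _ _ => nonneg_of_mem_rowStochastic hP) ht) hpos

end MarkovChain

section Policy

variable {S A : Type*} {avail : S → Finset A} {T : S → A → S → ℝ} {π : S → A → ℝ}
  {Tπ : Matrix S S ℝ}

theorem policyMatrix_mem_rowStochastic [Fintype S] [DecidableEq S]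
    (hT0 : ∀ s a s', 0 ≤ T s a s') (hT1 : ∀ s, ∀ a ∈ avail s, ∑ s', T s a s' = 1)
    (hpol : IsPolicy avail π)
    (hTπ : ∀ s s', Tπ s s' = ∑ a ∈ avail s, π s a * T s a s') : Tπ ∈ rowStochastic ℝ S := by
  refine mem_rowStochastic_iff_sum.2 ⟨fun s s' => ?_, fun s => ?_⟩
  · rw [hTπ]
    exact sum_nonneg fun a _ => mul_nonneg (hpol.1 s a) (hT0 s a s')
  · simp_rw [hTπ]
    rw [sum_comm]
    simp_rw [← mul_sum]
    rw [sum_congr rfl fun a ha => by rw [hT1 s a ha, mul_one], hpol.2 s]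

theorem sum_mul_policy (hπ : ∀ s, ∑ a ∈ avail s, π s a = 1) (w : S → ℝ) (s : S) :
    ∑ a ∈ avail s, w s * π s a = w s := by
  rw [← mul_sum, hπ, mul_one]

theorem sum_sum_mul_policy_mul_transition [Fintype S]
    (hTπ : ∀ s s', Tπ s s' = ∑ a ∈ avail s, π s a * T s a s') (w : S → ℝ) (s' : S) :
    ∑ s, ∑ a ∈ avail s, w s * π s a * T s a s' = (w ᵥ* Tπ) s' := by
  simp_rw [mul_assoc, ← mul_sum, ← hTπ]
  rfl

theorem chainEdge_eq (hTπ : ∀ s s', Tπ s s' = ∑ a ∈ avail s, π s a * T s a s') :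
    chainEdge avail T π = fun s s' => 0 < Tπ s s' := by
  funext s s'
  rw [chainEdge, hTπ]

end Policy

theorem occupation_measure_lp_feasible_general {S A : Type*} [Fintype S] [DecidableEq S]
    (avail : S → Finset A) (T : S → A → S → ℝ) (β : S → ℝ) (π : S → A → ℝ)
    (hT0 : ∀ s a s', 0 ≤ T s a s')
    (hT1 : ∀ s, ∀ a ∈ avail s, ∑ s', T s a s' = 1)
    (hβ0 : ∀ s, 0 ≤ β s)
    (hpol : IsPolicy avail π)
    (hCPU : IsCPU avail T β π)
    (Tπ : Matrix S S ℝ)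
    (hTπ : ∀ s s', Tπ s s' = ∑ a ∈ avail s, π s a * T s a s')
    (Tinf : Matrix S S ℝ)
    (hces : Tendsto (fun n : ℕ => (n : ℝ)⁻¹ • ∑ t ∈ Finset.Icc 1 n, Tπ ^ t)
      atTop (nhds Tinf))
    (x : S → A → ℝ)
    (hx : ∀ s a, x s a = (∑ s', β s' * Tinf s' s) * π s a) :
    (∀ s', ∑ s, ∑ a ∈ avail s, x s a * T s a s' = ∑ a ∈ avail s', x s' a) ∧
    (∀ s, s ∉ rSet (mdpEdge avail T) β → ∑ a ∈ avail s, x s a = 0) ∧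
    (∃ y : S → A → ℝ, (∀ s a, 0 ≤ y s a) ∧
      ∀ s', ∑ s, ∑ a ∈ avail s, y s a * T s a s' =
        (∑ a ∈ avail s', (x s' a + y s' a)) - β s') := by
  have hP := policyMatrix_mem_rowStochastic hT0 hT1 hpol hTπ
  obtain rfl : x = fun s a => (β ᵥ* Tinf) s * π s a := funext₂ hx
  obtain ⟨ν, hν0, hν⟩ := exists_nonneg_vecMul_eq_add_sub hces hP hβ0
  refine ⟨fun s' => ?_, fun s hs => ?_,
    fun s a => ν s * π s a, fun s a => mul_nonneg (hν0 s) (hpol.1 s a), fun s' => ?_⟩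
  · rw [sum_sum_mul_policy_mul_transition hTπ, sum_mul_policy hpol.2, vecMul_vecMul,
      cesaroLimit_mul_self hces hP]
  · rw [sum_mul_policy hpol.2]
    exact cesaroLimit_vecMul_eq_zero_of_notMem_rSet hces hP hβ0
      fun h => hs (hCPU.1 (chainEdge_eq hTπ ▸ h))
  · rw [sum_sum_mul_policy_mul_transition hTπ, sum_add_distrib, sum_mul_policy hpol.2,
      sum_mul_policy hpol.2, hν, Pi.sub_apply, Pi.add_apply, add_comm (ν s')]

/-- The occupation measure of any CPU policy is feasible for the base LP:
with `x_{sa} := Pr^∞_π(s,a) = (β^⊤T_π^∞)_s π(a|s)`, the vector `x` satisfies the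
stationarity constraints, vanishes on states outside the TSCCs of the MDP, and there
exists `y ≥ 0` satisfying the flow-balance constraints. -/
theorem occupation_measure_lp_feasible {S A : Type*} [Fintype S] [DecidableEq S]
    (avail : S → Finset A) (T : S → A → S → ℝ) (β : S → ℝ) (π : S → A → ℝ)
    (hT0 : ∀ s a s', 0 ≤ T s a s')
    (hT1 : ∀ s, ∀ a ∈ avail s, ∑ s', T s a s' = 1)
    (hβ0 : ∀ s, 0 ≤ β s) (hβ1 : ∑ s, β s = 1)
    (hpol : IsPolicy avail π)
    (hCPU : IsCPU avail T β π)
    (Tπ : Matrix S S ℝ)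
    (hTπ : ∀ s s', Tπ s s' = ∑ a ∈ avail s, π s a * T s a s')
    (Tinf : Matrix S S ℝ)
    (hces : Tendsto (fun n : ℕ => (n : ℝ)⁻¹ • ∑ t ∈ Finset.Icc 1 n, Tπ ^ t)
      atTop (nhds Tinf))
    (x : S → A → ℝ)
    (hx : ∀ s a, x s a = (∑ s', β s' * Tinf s' s) * π s a) :
    (∀ s', ∑ s, ∑ a ∈ avail s, x s a * T s a s' = ∑ a ∈ avail s', x s' a) ∧
    (∀ s, s ∉ rSet (mdpEdge avail T) β → ∑ a ∈ avail s, x s a = 0) ∧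
    (∃ y : S → A → ℝ, (∀ s a, 0 ≤ y s a) ∧
      ∀ s', ∑ s, ∑ a ∈ avail s, y s a * T s a s' =
        (∑ a ∈ avail s', (x s' a + y s' a)) - β s') :=
  occupation_measure_lp_feasible_general avail T β π hT0 hT1 hβ0 hpol hCPU Tπ hTπ Tinf hces x hx
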